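/- arXiv:0708.2153 — 4 statements merged into one kernel-verified Lean document; each statement's English description precedes it below -/
import Mathlib

section
/- The zero-truncated Poisson mixture model is identifiable: if Q and G are probability measures on (0,∞) with ∫ λ^x/(x!(e^λ−1)) dQ(λ) = ∫ λ^x/(x!(e^λ−1)) dG(λ) for every integer x ≥ 1, then Q = G. -/
/-!
Put `dΨ(λ) = λ (e^λ - 1)⁻¹ dQ(λ)`. The hypothesis says exactly that `Ψ_Q` and `Ψ_G` have the
same moments, and since `e^{tλ} λ / (e^λ - 1) ≤ 2` for `λ > 0`, `t ≤ 1/2`, both have a moment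
generating function that is finite near `0`. Their complex moment generating functions are then
holomorphic on a vertical strip around the imaginary axis and have the same Taylor coefficients
at `0`, so by the identity theorem they agree on the imaginary axis: `Ψ_Q` and `Ψ_G` have the same
characteristic function, hence are equal, and `Q`, `G` are recovered by dividing out the positive
density.
-/

open MeasureTheory ProbabilityTheory Filter Topology
open scoped NNReal

namespace MeasureTheory

lemma iteratedDeriv_complexMGF_id_zero {μ : Measure ℝ}
    (hμ : 0 ∈ interior (integrableExpSet id μ)) (n : ℕ) :
    iteratedDeriv n (complexMGF id μ) 0 = ↑(∫ x, x ^ n ∂μ) := by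
  rw [iteratedDeriv_complexMGF (by simpa using hμ), ← integral_complex_ofReal]
  simp

theorem Measure.ext_of_integral_pow_eq {μ ν : Measure ℝ}
    [IsFiniteMeasure μ] [IsFiniteMeasure ν]
    (hμ : 0 ∈ interior (integrableExpSet id μ)) (hν : 0 ∈ interior (integrableExpSet id ν))
    (h : ∀ n : ℕ, ∫ x, x ^ n ∂μ = ∫ x, x ^ n ∂ν) : μ = ν := by
  set U : Set ℂ := Complex.re ⁻¹' (interior (integrableExpSet id μ) ∩
    interior (integrableExpSet id ν))
  have hU_open : IsOpen U :=
    (isOpen_interior.inter isOpen_interior).preimage Complex.continuous_re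
  have hU_conn : IsPreconnected U :=
    ((convex_integrableExpSet.interior.inter convex_integrableExpSet.interior).linear_preimage
      Complex.reLm).isPreconnected
  have h0U : (0 : ℂ) ∈ U := ⟨hμ, hν⟩
  have hfμ : AnalyticOnNhd ℂ (complexMGF id μ) U :=
    analyticOnNhd_complexMGF.mono fun _ hz => hz.1
  have hfν : AnalyticOnNhd ℂ (complexMGF id ν) U :=
    analyticOnNhd_complexMGF.mono fun _ hz => hz.2
  have h_near : complexMGF id μ =ᶠ[𝓝 0] complexMGF id ν := by
    obtain ⟨r, hr, hball⟩ := Metric.isOpen_iff.1 hU_open 0 h0U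
    filter_upwards [Metric.ball_mem_nhds 0 hr] with z hz
    rw [← Complex.taylorSeries_eq_on_ball' hz (hfμ.differentiableOn.mono hball),
      ← Complex.taylorSeries_eq_on_ball' hz (hfν.differentiableOn.mono hball)]
    simp_rw [iteratedDeriv_complexMGF_id_zero hμ, iteratedDeriv_complexMGF_id_zero hν, h]
  have h_eq := hfμ.eqOn_of_preconnected_of_eventuallyEq hfν hU_conn h0U h_near
  refine Measure.ext_of_charFun (funext fun t => ?_)
  rw [← complexMGF_id_mul_I, ← complexMGF_id_mul_I]
  exact h_eq (by simpa [U] using h0U)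

end MeasureTheory

namespace TruncatedPoisson

lemma exp_sub_one_pos {l : ℝ} (hl : 0 < l) : 0 < Real.exp l - 1 :=
  sub_pos.2 (Real.one_lt_exp_iff.2 hl)

/-- With `u = l / 2`, the claim reads `u e^u ≤ (e^u - 1)(e^u + 1)`. -/
lemma exp_mul_mul_div_exp_sub_one_le_two {l t : ℝ} (hl : 0 < l) (ht : t ≤ 1 / 2) :
    Real.exp (t * l) * (l / (Real.exp l - 1)) ≤ 2 := by
  have h_exp : Real.exp (t * l) ≤ Real.exp (l / 2) := Real.exp_le_exp.2 (by nlinarith)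
  have h_sq : Real.exp l = Real.exp (l / 2) * Real.exp (l / 2) := by
    rw [← Real.exp_add, add_halves]
  have h_lin := Real.add_one_le_exp (l / 2)
  have h_pos := Real.exp_pos (l / 2)
  rw [← mul_div_assoc, div_le_iff₀ (exp_sub_one_pos hl)]
  calc Real.exp (t * l) * l ≤ Real.exp (l / 2) * l := by gcongr
    _ ≤ 2 * (Real.exp l - 1) := by rw [h_sq]; nlinarith

noncomputable def weight (l : ℝ) : ℝ≥0 := (l / (Real.exp l - 1)).toNNReal

lemma measurable_weight : Measurable weight :=
  (measurable_id.div (Real.measurable_exp.sub measurable_const)).real_toNNReal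

lemma coe_weight {l : ℝ} (hl : 0 < l) : (weight l : ℝ) = l / (Real.exp l - 1) :=
  Real.coe_toNNReal _ (div_pos hl (exp_sub_one_pos hl)).le

lemma weight_pos {l : ℝ} (hl : 0 < l) : 0 < weight l :=
  Real.toNNReal_pos.2 (div_pos hl (exp_sub_one_pos hl))

/-- The measure `Ψ` of the paper. -/
noncomputable def tilted (Q : Measure ℝ) : Measure ℝ := Q.withDensity fun l => weight l

variable {Q : Measure ℝ}

lemma integrable_exp_mul_tilted [IsFiniteMeasure Q] (hQ : ∀ᵐ l ∂Q, 0 < l) {t : ℝ}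
    (ht : t ≤ 1 / 2) : Integrable (fun x => Real.exp (t * x)) (tilted Q) := by
  rw [tilted, integrable_withDensity_iff_integrable_smul measurable_weight]
  have h_meas : Measurable fun x => Real.exp (t * x) := by fun_prop
  refine (integrable_const (2 : ℝ)).mono' (measurable_weight.smul h_meas).aestronglyMeasurable ?_
  filter_upwards [hQ] with l hl
  have := exp_sub_one_pos hl
  rw [NNReal.smul_def, smul_eq_mul, coe_weight hl, Real.norm_of_nonneg (by positivity), mul_comm]
  exact exp_mul_mul_div_exp_sub_one_le_two hl ht

lemma isFiniteMeasure_tilted [IsFiniteMeasure Q] (hQ : ∀ᵐ l ∂Q, 0 < l) :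
    IsFiniteMeasure (tilted Q) :=
  (integrable_const_iff_isFiniteMeasure one_ne_zero).1 <| by
    simpa using integrable_exp_mul_tilted hQ (t := 0) (by norm_num)

lemma zero_mem_interior_integrableExpSet_tilted [IsFiniteMeasure Q] (hQ : ∀ᵐ l ∂Q, 0 < l) :
    0 ∈ interior (integrableExpSet id (tilted Q)) :=
  interior_mono (fun _ ht => integrable_exp_mul_tilted hQ (Set.mem_Iic.1 ht))
    (by rw [interior_Iic]; norm_num)

lemma integral_pow_tilted (hQ : ∀ᵐ l ∂Q, 0 < l) (n : ℕ) :
    ∫ x, x ^ n ∂(tilted Q) =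
      (n + 1).factorial * ∫ l, l ^ (n + 1) / ((n + 1).factorial * (Real.exp l - 1)) ∂Q := by
  rw [tilted, integral_withDensity_eq_integral_smul measurable_weight, ← integral_const_mul]
  refine integral_congr_ae ?_
  filter_upwards [hQ] with l hl
  have := exp_sub_one_pos hl
  rw [NNReal.smul_def, smul_eq_mul, coe_weight hl]
  field_simp
  ring

lemma withDensity_inv_weight_tilted (hQ : ∀ᵐ l ∂Q, 0 < l) :
    (tilted Q).withDensity (fun l => (weight l : ENNReal)⁻¹) = Q :=
  withDensity_inv_same measurable_weight.coe_nnreal_ennreal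
    (by filter_upwards [hQ] with l hl using ENNReal.coe_ne_zero.2 (weight_pos hl).ne')
    (by filter_upwards with l using ENNReal.coe_ne_top)

end TruncatedPoisson

open TruncatedPoisson

/-- Identifiability of the zero-truncated Poisson mixture model:
if two mixing distributions `Q, G` on `(0,∞)` give the same truncated mixture
probabilities `∫ λ^x/(x! (e^λ - 1)) dQ(λ)` for every integer `x ≥ 1`, then `Q = G`. -/
theorem truncated_poisson_mixture_identifiable
    (Q G : Measure ℝ) [IsProbabilityMeasure Q] [IsProbabilityMeasure G]
    (hQ : Q (Set.Ioi (0:ℝ))ᶜ = 0) (hG : G (Set.Ioi (0:ℝ))ᶜ = 0)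
    (h : ∀ x : ℕ, 1 ≤ x →
      ∫ l, l ^ x / (Nat.factorial x * (Real.exp l - 1)) ∂Q =
      ∫ l, l ^ x / (Nat.factorial x * (Real.exp l - 1)) ∂G) :
    Q = G := by
  have hQ_pos : ∀ᵐ l ∂Q, 0 < l := ae_iff.2 hQ
  have hG_pos : ∀ᵐ l ∂G, 0 < l := ae_iff.2 hG
  have := isFiniteMeasure_tilted hQ_pos
  have := isFiniteMeasure_tilted hG_pos
  have h_tilted : tilted Q = tilted G :=
    Measure.ext_of_integral_pow_eq (zero_mem_interior_integrableExpSet_tilted hQ_pos)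
      (zero_mem_interior_integrableExpSet_tilted hG_pos) fun n => by
        rw [integral_pow_tilted hQ_pos, integral_pow_tilted hG_pos, h (n + 1) n.succ_pos]
  rw [← withDensity_inv_weight_tilted hQ_pos, ← withDensity_inv_weight_tilted hG_pos, h_tilted]
end

section
/- The odds functional θ is unbounded on every Hellinger ball: for every mixing distribution Q on (0,∞) and every ε > 0, sup{ θ(f_G) : G a mixing distribution with h(f_Q, f_G) ≤ ε } = ∞, where h is the Hellinger distance between the truncated mixture densities. -/
open MeasureTheory

/-- Truncated Poisson mixture probability `f_Q(x) = ∫ λ^x/(x!(e^λ-1)) dQ(λ)`. -/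
noncomputable def truncPMF (Q : Measure ℝ) (x : ℕ) : ℝ :=
  ∫ l, l ^ x / (Nat.factorial x * (Real.exp l - 1)) ∂Q

/-- The odds functional `θ(f_Q) = ∫ (e^λ - 1)⁻¹ dQ(λ)`. -/
noncomputable def odds (Q : Measure ℝ) : ℝ :=
  ∫ l, (Real.exp l - 1)⁻¹ ∂Q

/-!
Split `Q = μ + ν` with `ν` of small mass `m > 0` and `(e^λ - 1)⁻¹` integrable against `μ`, and
take `G = μ + m δ_c`. The truncated Poisson weights of each `λ > 0` sum to `1`, so the squared
Hellinger distance is at most the total variation `2m`, whereas `θ(f_G) ≥ m (e^c - 1)⁻¹` blows up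
as `c → 0`.
-/

open Real Set Finset

open scoped ENNReal Nat

noncomputable def truncPoisson (x : ℕ) (l : ℝ) : ℝ := l ^ x / (x ! * (exp l - 1))

noncomputable def hellingerSq (μ ν : Measure ℝ) : ℝ :=
  ∑' x : ℕ, (√(truncPMF μ (x + 1)) - √(truncPMF ν (x + 1))) ^ 2

lemma truncPMF_eq_integral (μ : Measure ℝ) (x : ℕ) : truncPMF μ x = ∫ l, truncPoisson x l ∂μ :=
  rfl

lemma exp_sub_one_pos {l : ℝ} (hl : 0 < l) : 0 < exp l - 1 :=
  sub_pos.2 (one_lt_exp_iff.2 hl)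

lemma truncPoisson_nonneg {l : ℝ} (hl : 0 < l) (x : ℕ) : 0 ≤ truncPoisson x l := by
  have := exp_sub_one_pos hl
  unfold truncPoisson
  positivity

lemma sum_range_truncPoisson_succ_le_one {l : ℝ} (hl : 0 < l) (N : ℕ) :
    ∑ x ∈ range N, truncPoisson (x + 1) l ≤ 1 := by
  have hexp := Real.sum_le_exp_of_nonneg hl.le (N + 1)
  rw [sum_range_succ'] at hexp
  simp only [pow_zero, Nat.factorial_zero, Nat.cast_one, div_one] at hexp
  simp only [truncPoisson, ← div_div, ← sum_div]
  rw [div_le_one (exp_sub_one_pos hl)]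
  linarith

lemma truncPoisson_succ_le_one {l : ℝ} (hl : 0 < l) (x : ℕ) : truncPoisson (x + 1) l ≤ 1 :=
  (single_le_sum (fun y _ => truncPoisson_nonneg hl (y + 1)) (self_mem_range_succ x)).trans
    (sum_range_truncPoisson_succ_le_one hl (x + 1))

lemma measurable_truncPoisson (x : ℕ) : Measurable (truncPoisson x) := by
  unfold truncPoisson
  fun_prop

lemma sq_sqrt_sub_sqrt_le_abs_sub {a b : ℝ} (ha : 0 ≤ a) (hb : 0 ≤ b) :
    (√a - √b) ^ 2 ≤ |a - b| := by
  rcases le_total a b with h | h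
  · rw [abs_of_nonpos (by linarith)]
    nlinarith [sq_sqrt ha, sq_sqrt hb, sqrt_nonneg a, sqrt_le_sqrt h]
  · rw [abs_of_nonneg (by linarith)]
    nlinarith [sq_sqrt ha, sq_sqrt hb, sqrt_nonneg b, sqrt_le_sqrt h]

section Mixtures

variable {μ ν ρ : Measure ℝ}

lemma integrable_truncPoisson_succ [IsFiniteMeasure μ] (hμ : ∀ᵐ l ∂μ, 0 < l) (x : ℕ) :
    Integrable (truncPoisson (x + 1)) μ := by
  refine (integrable_const 1).mono' (measurable_truncPoisson _).aestronglyMeasurable ?_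
  filter_upwards [hμ] with l hl
  rw [norm_of_nonneg (truncPoisson_nonneg hl _)]
  exact truncPoisson_succ_le_one hl x

lemma truncPMF_nonneg (hμ : ∀ᵐ l ∂μ, 0 < l) (x : ℕ) : 0 ≤ truncPMF μ x :=
  integral_nonneg_of_ae (by filter_upwards [hμ] with l hl using truncPoisson_nonneg hl x)

lemma sum_range_truncPMF_succ_le [IsFiniteMeasure μ] (hμ : ∀ᵐ l ∂μ, 0 < l) (N : ℕ) :
    ∑ x ∈ range N, truncPMF μ (x + 1) ≤ μ.real univ := by
  have hint := integrable_truncPoisson_succ hμ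
  simp only [truncPMF_eq_integral]
  rw [← integral_finsetSum _ fun x _ => hint x]
  calc ∫ l, ∑ x ∈ range N, truncPoisson (x + 1) l ∂μ ≤ ∫ _, (1 : ℝ) ∂μ :=
        integral_mono_ae (integrable_finsetSum _ fun x _ => hint x) (integrable_const 1)
          (by filter_upwards [hμ] with l hl using sum_range_truncPoisson_succ_le_one hl N)
    _ = μ.real univ := by simp

lemma truncPMF_add_measure [IsFiniteMeasure μ] [IsFiniteMeasure ν] (hμ : ∀ᵐ l ∂μ, 0 < l)
    (hν : ∀ᵐ l ∂ν, 0 < l) (x : ℕ) :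
    truncPMF (μ + ν) (x + 1) = truncPMF μ (x + 1) + truncPMF ν (x + 1) :=
  integral_add_measure (integrable_truncPoisson_succ hμ x) (integrable_truncPoisson_succ hν x)

lemma hellingerSq_add_left_le [IsFiniteMeasure μ] [IsFiniteMeasure ν] [IsFiniteMeasure ρ]
    (hμ : ∀ᵐ l ∂μ, 0 < l) (hν : ∀ᵐ l ∂ν, 0 < l) (hρ : ∀ᵐ l ∂ρ, 0 < l) :
    hellingerSq (μ + ν) (μ + ρ) ≤ ν.real univ + ρ.real univ := by
  have hterm (x : ℕ) : (√(truncPMF (μ + ν) (x + 1)) - √(truncPMF (μ + ρ) (x + 1))) ^ 2 ≤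
      truncPMF ν (x + 1) + truncPMF ρ (x + 1) := by
    refine (sq_sqrt_sub_sqrt_le_abs_sub (truncPMF_nonneg (ae_add_measure_iff.2 ⟨hμ, hν⟩) _)
      (truncPMF_nonneg (ae_add_measure_iff.2 ⟨hμ, hρ⟩) _)).trans ?_
    rw [truncPMF_add_measure hμ hν, truncPMF_add_measure hμ hρ, add_sub_add_left_eq_sub]
    have := truncPMF_nonneg hν (x + 1)
    have := truncPMF_nonneg hρ (x + 1)
    exact abs_sub_le_iff.2 ⟨by linarith, by linarith⟩
  refine Real.tsum_le_of_sum_range_le (fun _ => sq_nonneg _) fun N => ?_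
  calc _ ≤ ∑ x ∈ range N, (truncPMF ν (x + 1) + truncPMF ρ (x + 1)) :=
        sum_le_sum fun x _ => hterm x
    _ = _ := sum_add_distrib
    _ ≤ _ := add_le_add (sum_range_truncPMF_succ_le hν N) (sum_range_truncPMF_succ_le hρ N)

lemma odds_nonneg (hμ : ∀ᵐ l ∂μ, 0 < l) : 0 ≤ odds μ :=
  integral_nonneg_of_ae (by filter_upwards [hμ] with l hl using (inv_pos.2 (exp_sub_one_pos hl)).le)

lemma odds_add_smul_dirac (hμ : Integrable (fun l => (exp l - 1)⁻¹) μ) {m : ℝ≥0∞} (hm : m ≠ ∞)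
    (c : ℝ) : odds (μ + m • Measure.dirac c) = odds μ + m.toReal * (exp c - 1)⁻¹ := by
  rw [odds, integral_add_measure hμ ((integrable_dirac enorm_lt_top).smul_measure hm),
    integral_smul_measure, integral_dirac, smul_eq_mul, odds]

lemma integrable_inv_exp_sub_one_restrict_Ioi [IsFiniteMeasure μ] {δ : ℝ} (hδ : 0 < δ) :
    Integrable (fun l => (exp l - 1)⁻¹) (μ.restrict (Ioi δ)) := by
  refine Measure.integrableOn_of_bounded (M := (exp δ - 1)⁻¹) (measure_ne_top _ _)
    (by fun_prop) ?_
  filter_upwards [ae_restrict_mem measurableSet_Ioi] with l (hl : δ < l)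
  rw [norm_of_nonneg (inv_pos.2 (exp_sub_one_pos (hδ.trans hl))).le]
  exact inv_anti₀ (exp_sub_one_pos hδ) (by gcongr)

end Mixtures

lemma exists_pos_measureReal_Iic_lt (Q : Measure ℝ) [IsProbabilityMeasure Q]
    (hQ : ∀ᵐ l ∂Q, 0 < l) {s : ℝ} (hs : 0 < s) : ∃ δ, 0 < δ ∧ Q.real (Iic δ) < s := by
  have hcdf0 : ProbabilityTheory.cdf Q 0 = 0 := by
    rw [ProbabilityTheory.cdf_eq_real, measureReal_def,
      measure_eq_zero_iff_ae_notMem.2 (by filter_upwards [hQ] with l hl using not_le.2 hl),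
      ENNReal.toReal_zero]
  have hlt := (((ProbabilityTheory.cdf Q).right_continuous 0).mono Ioi_subset_Ici_self
    ).eventually_lt_const (hcdf0 ▸ hs)
  obtain ⟨δ, hδs, hδ⟩ := (hlt.and self_mem_nhdsWithin).exists
  exact ⟨δ, hδ, ProbabilityTheory.cdf_eq_real Q δ ▸ hδs⟩

-- `ν` takes the mass of `Q` on `(0, δ]` and a fraction `s` of the rest; `μ` lives on `(δ, ∞)`,
-- where `(e^λ - 1)⁻¹` is bounded.
lemma exists_eq_add_integrable_of_measureReal_le (Q : Measure ℝ) [IsProbabilityMeasure Q]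
    (hQ : ∀ᵐ l ∂Q, 0 < l) {η : ℝ} (hη : 0 < η) :
    ∃ μ ν : Measure ℝ, Q = μ + ν ∧
      Integrable (fun l => (exp l - 1)⁻¹) μ ∧ 0 < ν.real univ ∧ ν.real univ ≤ η := by
  set s := min (η / 2) 1
  have hs : 0 < s := lt_min (half_pos hη) one_pos
  obtain ⟨δ, hδ, hQδ⟩ := exists_pos_measureReal_Iic_lt Q hQ hs
  have hσ : ENNReal.ofReal s ≤ 1 := ENNReal.ofReal_le_one.2 (min_le_right _ _)
  refine ⟨(1 - ENNReal.ofReal s) • Q.restrict (Ioi δ),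
    ENNReal.ofReal s • Q.restrict (Ioi δ) + Q.restrict (Iic δ), ?_,
    (integrable_inv_exp_sub_one_restrict_Ioi hδ).smul_measure (by simp), ?_⟩
  · rw [← add_assoc, ← add_smul, tsub_add_cancel_of_le hσ, one_smul, ← compl_Ioi,
      Measure.restrict_add_restrict_compl measurableSet_Ioi]
  · have hsplit := measureReal_add_measureReal_compl (μ := Q) (measurableSet_Ioi (a := δ))
    rw [compl_Ioi, probReal_univ] at hsplit
    have : s ≤ η / 2 := min_le_left _ _
    have : s ≤ 1 := min_le_right _ _
    have : 0 ≤ Q.real (Ioi δ) := measureReal_nonneg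
    have : 0 ≤ Q.real (Iic δ) := measureReal_nonneg
    rw [measureReal_add_apply (ENNReal.mul_ne_top ENNReal.ofReal_ne_top (measure_ne_top _ _)),
      measureReal_ennreal_smul_apply, measureReal_restrict_apply_univ,
      measureReal_restrict_apply_univ, ENNReal.toReal_ofReal hs.le]
    constructor <;> nlinarith

lemma exists_pos_le_mul_inv_exp_sub_one {m : ℝ} (hm : 0 < m) (M : ℝ) :
    ∃ c, 0 < c ∧ M ≤ m * (exp c - 1)⁻¹ := by
  have hM : 0 < max M 1 := lt_max_of_lt_right one_pos
  refine ⟨log (1 + m / max M 1), log_pos (by simp [hm, hM]), ?_⟩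
  rw [exp_log (by positivity), add_sub_cancel_left, inv_div, mul_div_cancel₀ _ hm.ne']
  exact le_max_left M 1

/-- The odds functional is unbounded on every Hellinger ball:
for every mixing distribution `Q` on `(0,∞)` and every `ε > 0`, the supremum of
`θ(f_G)` over mixing distributions `G` with `h(f_Q, f_G) ≤ ε` is infinite, i.e.
for every `M` there is such a `G` with `θ(f_G) ≥ M`. -/
theorem odds_unbounded_on_hellinger_ball
    (Q : Measure ℝ) [IsProbabilityMeasure Q] (hQ : Q (Set.Ioi (0:ℝ))ᶜ = 0)
    (ε : ℝ) (hε : 0 < ε) (M : ℝ) :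
    ∃ G : Measure ℝ, IsProbabilityMeasure G ∧ G (Set.Ioi (0:ℝ))ᶜ = 0 ∧
      (∑' x : ℕ, (Real.sqrt (truncPMF Q (x + 1)) - Real.sqrt (truncPMF G (x + 1))) ^ 2)
        ≤ ε ^ 2 ∧
      M ≤ odds G := by
  have hQpos : ∀ᵐ l ∂Q, 0 < l := mem_ae_iff.2 hQ
  obtain ⟨μ, ν, rfl, hμinv, hν0, hνε⟩ :=
    exists_eq_add_integrable_of_measureReal_le Q hQpos (half_pos (pow_pos hε 2))
  have : IsFiniteMeasure μ := isFiniteMeasure_of_le (μ + ν) (Measure.le_add_right le_rfl)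
  have : IsFiniteMeasure ν := isFiniteMeasure_of_le (μ + ν) (Measure.le_add_left le_rfl)
  obtain ⟨hμ, hν⟩ := ae_add_measure_iff.1 hQpos
  obtain ⟨c, hc, hcM⟩ := exists_pos_le_mul_inv_exp_sub_one hν0 M
  have : IsFiniteMeasure (ν univ • Measure.dirac c) :=
    (Measure.dirac c).smul_finite (measure_ne_top _ _)
  have hdirac : ∀ᵐ l ∂(ν univ • Measure.dirac c), 0 < l :=
    Measure.ae_smul_measure ((ae_dirac_iff measurableSet_Ioi).2 hc) _
  refine ⟨μ + ν univ • Measure.dirac c, ⟨?_⟩, mem_ae_iff.1 (ae_add_measure_iff.2 ⟨hμ, hdirac⟩),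
    ?_, ?_⟩
  · have h := measure_univ (μ := μ + ν)
    rw [Measure.add_apply] at h
    simpa using h
  · calc hellingerSq (μ + ν) (μ + ν univ • Measure.dirac c)
        ≤ ν.real univ + (ν univ • Measure.dirac c).real univ :=
          hellingerSq_add_left_le hμ hν hdirac
      _ = 2 * ν.real univ := by
        rw [measureReal_ennreal_smul_apply, probReal_univ (μ := Measure.dirac c), mul_one,
          ← measureReal_def, two_mul]
      _ ≤ ε ^ 2 := by linarith
  · calc M ≤ ν.real univ * (exp c - 1)⁻¹ := hcM
      _ ≤ odds μ + ν.real univ * (exp c - 1)⁻¹ := le_add_of_nonneg_left (odds_nonneg hμ)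
      _ = odds (μ + ν univ • Measure.dirac c) :=
          (odds_add_smul_dirac hμinv (measure_ne_top _ _) c).symm
end

section
/- Recursion for the lower-bound functionals: with μ(x) real, Γ_k = (μ(i+j))_{i,j=1}^k, a_k = (μ(j))_{j=1}^k, θ_k = a_k' Γ_k^{-1} a_k, and H̄_k = (μ(i+j+1))_{i,j=0}^k, if Γ_k and Γ_{k+1} are positive definite then θ_{k+1} = θ_k + det(H̄_k)^2 / (det(Γ_k) · det(Γ_{k+1})). In particular θ_k < θ_{k+1} whenever det(H̄_k) ≠ 0. -/
open Matrix

/-!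
Split off the last row and column: `Γ_{k+1} = [[Γ_k, b], [bᵀ, d]]` with Schur complement
`s = d - bᵀ Γ_k⁻¹ b`, so `det Γ_{k+1} = det Γ_k · s`. Solving `Γ_{k+1} x = (a_k, μ(k+1))` by block
elimination gives `θ_{k+1} = θ_k + β² / s` with `β = μ(k+1) - bᵀ Γ_k⁻¹ a_k`. A cyclic rotation of
the columns turns `H̄_k` into the bordered matrix `[[Γ_k, a_k], [bᵀ, μ(k+1)]]`, whose determinant
is `det Γ_k · β`; the sign of the rotation disappears on squaring, so `β² / s` is
`det(H̄_k)² / (det Γ_k · det Γ_{k+1})`.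
-/

namespace Matrix

section Bordered

variable {K : Type*} [Field K] {n o : Type*} [Fintype n] [DecidableEq n]
  [Fintype o] [DecidableEq o] [Unique o]

theorem det_fromBlocks_replicateCol_replicateRow (A : Matrix n n K) (hA : IsUnit A.det)
    (u v : n → K) (c : K) :
    (fromBlocks A (replicateCol o u) (replicateRow o v) (of fun _ _ => c)).det =
      A.det * (c - v ⬝ᵥ A⁻¹ *ᵥ u) := by
  let := A.invertibleOfIsUnitDet hA
  rw [det_fromBlocks₁₁, invOf_eq_nonsing_inv, det_unique (n := o), Matrix.mul_assoc,
    ← replicateCol_mulVec]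
  rfl

theorem IsSymm.dotProduct_inv_mulVec_comm {A : Matrix n n K} (hA : A.IsSymm) (u v : n → K) :
    u ⬝ᵥ A⁻¹ *ᵥ v = v ⬝ᵥ A⁻¹ *ᵥ u := by
  rw [dotProduct_mulVec, ← mulVec_transpose, transpose_nonsing_inv, hA.eq, dotProduct_comm]

theorem sumElim_dotProduct_inv_fromBlocks_mulVec {A : Matrix n n K} (hA : A.IsSymm)
    (hdet : IsUnit A.det) (a b : n → K) (c d : K) (hs : d - b ⬝ᵥ A⁻¹ *ᵥ b ≠ 0) :
    Sum.elim a (fun _ : o => c) ⬝ᵥ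
        (fromBlocks A (replicateCol o b) (replicateRow o b) (of fun _ _ => d))⁻¹ *ᵥ
          Sum.elim a (fun _ => c) =
      a ⬝ᵥ A⁻¹ *ᵥ a + (c - b ⬝ᵥ A⁻¹ *ᵥ a) ^ 2 / (d - b ⬝ᵥ A⁻¹ *ᵥ b) := by
  set M := fromBlocks A (replicateCol o b) (replicateRow o b) (of fun _ _ => d)
  set s := d - b ⬝ᵥ A⁻¹ *ᵥ b
  obtain ⟨t, hts⟩ : ∃ t, t * s = c - b ⬝ᵥ A⁻¹ *ᵥ a := ⟨_, div_mul_cancel₀ _ hs⟩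
  have hM : IsUnit M.det := by
    rw [det_fromBlocks_replicateCol_replicateRow A hdet]
    exact hdet.mul hs.isUnit
  have hconst (x y : K) : (fun _ : o => x) ⬝ᵥ (fun _ => y) = x * y := by
    simp [dotProduct]
  have hsolve : M *ᵥ Sum.elim (A⁻¹ *ᵥ (a - t • b)) (fun _ => t) = Sum.elim a (fun _ => c) := by
    rw [fromBlocks_mulVec, Sum.elim_comp_inl, Sum.elim_comp_inr, mulVec_mulVec,
      mul_nonsing_inv _ hdet, one_mulVec]
    congr 1 <;> ext i
    · rw [Pi.add_apply, Pi.sub_apply, Pi.smul_apply, smul_eq_mul]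
      simp only [mulVec, replicateCol_apply, hconst]
      ring
    · rw [Pi.add_apply, replicateRow_mulVec_eq_const, Function.const_apply, mulVec_sub, mulVec_smul,
        dotProduct_sub, dotProduct_smul, smul_eq_mul]
      simp only [mulVec, of_apply, hconst]
      linear_combination hts
  have hx : M⁻¹ *ᵥ Sum.elim a (fun _ => c) = Sum.elim (A⁻¹ *ᵥ (a - t • b)) (fun _ => t) := by
    rw [← hsolve, mulVec_mulVec, nonsing_inv_mul _ hM, one_mulVec]
  rw [hx, sumElim_dotProduct_sumElim, mulVec_sub, mulVec_smul, dotProduct_sub, dotProduct_smul,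
    hA.dotProduct_inv_mulVec_comm a b, ← hts, hconst, smul_eq_mul,
    show (t * s) ^ 2 / s = t * (t * s) by field_simp, hts]
  ring

end Bordered

theorem det_submatrix_id_perm_sq {n R : Type*} [Fintype n] [DecidableEq n] [CommRing R]
    (M : Matrix n n R) (σ : Equiv.Perm n) : (M.submatrix id σ).det ^ 2 = M.det ^ 2 := by
  rw [det_permute', mul_pow, ← Int.cast_pow, ← Units.val_pow_eq_pow_val, Int.units_sq]
  simp

theorem dotProduct_inv_mulVec_submatrix_equiv {m n K : Type*} [Fintype m] [DecidableEq m]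
    [Fintype n] [DecidableEq n] [Field K] (M : Matrix m m K) (e : n ≃ m) (v : m → K) :
    (v ∘ e) ⬝ᵥ (M.submatrix e e)⁻¹ *ᵥ (v ∘ e) = v ⬝ᵥ M⁻¹ *ᵥ v := by
  rw [inv_submatrix_equiv, submatrix_mulVec_equiv, Function.comp_assoc, e.self_comp_symm,
    Function.comp_id, ← comp_equiv_symm_dotProduct]
  simp [Function.comp_assoc]

end Matrix

section Hankel

variable {α : Type*} (f : ℕ → α)

theorem hankel_submatrix_finSumFinEquiv (m k : ℕ) :
    (of fun i j : Fin (k + 1) => f (i + j + m)).submatrix finSumFinEquiv finSumFinEquiv =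
      fromBlocks (of fun i j : Fin k => f (i + j + m))
        (replicateCol (Fin 1) fun i : Fin k => f (k + i + m))
        (replicateRow (Fin 1) fun j : Fin k => f (k + j + m)) (of fun _ _ => f (k + k + m)) := by
  ext (i | i) (j | j) <;> simp [fromBlocks, replicateCol, replicateRow, Nat.add_comm _ k]

theorem hankel_submatrix_finRotate (k : ℕ) :
    ((of fun i j : Fin (k + 1) => f (i + j + 1)).submatrix id (finRotate (k + 1))).submatrix
        finSumFinEquiv finSumFinEquiv =
      fromBlocks (of fun i j : Fin k => f (i + j + 2))
        (replicateCol (Fin 1) fun i : Fin k => f (i + 1))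
        (replicateRow (Fin 1) fun j : Fin k => f (k + j + 2)) (of fun _ _ => f (k + 1)) := by
  have hinl (j : Fin k) : (finRotate (k + 1) (finSumFinEquiv (.inl j)) : ℕ) = j + 1 :=
    coe_finRotate_of_ne_last (Fin.castSucc_lt_last j).ne
  have hinr (j : Fin 1) : (finRotate (k + 1) (finSumFinEquiv (.inr j)) : ℕ) = 0 := by
    rw [show finSumFinEquiv (.inr j) = Fin.last k from Fin.ext (by simp [Fin.fin_one_eq_zero j]),
      finRotate_last, Fin.val_zero]
  ext (i | i) (j | j) <;>
    simp only [submatrix_apply, id_eq, of_apply, hinl, hinr] <;>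
    simp [fromBlocks, replicateCol, replicateRow, ← Nat.add_assoc]

theorem comp_finSumFinEquiv_eq_sumElim (m k : ℕ) :
    (fun i : Fin (k + 1) => f (i + m)) ∘ finSumFinEquiv =
      Sum.elim (fun i : Fin k => f (i + m)) (fun _ : Fin 1 => f (k + m)) := by
  ext (i | i) <;> simp [Fin.fin_one_eq_zero]

end Hankel

/-- Recursion for the lower-bound functionals: if `Γ_k` and
`Γ_{k+1}` are positive definite then
`θ_{k+1} = θ_k + det(H̄_k)² / (det Γ_k · det Γ_{k+1})`, where
`θ_k = a_k' Γ_k⁻¹ a_k`, `Γ_k = (μ(i+j))_{i,j=1..k}`, `a_k = (μ(j))_{j=1..k}`,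
`H̄_k = (μ(i+j+1))_{i,j=0..k}`. In particular `θ_k < θ_{k+1}` when `det H̄_k ≠ 0`. -/
theorem theta_recursion (k : ℕ) (μ : ℕ → ℝ)
    (Γk : Matrix (Fin k) (Fin k) ℝ)
    (hΓk : Γk = Matrix.of fun i j : Fin k => μ ((i : ℕ) + (j : ℕ) + 2))
    (Γk1 : Matrix (Fin (k + 1)) (Fin (k + 1)) ℝ)
    (hΓk1 : Γk1 = Matrix.of fun i j : Fin (k + 1) => μ ((i : ℕ) + (j : ℕ) + 2))
    (hpos : Γk.PosDef) (hpos1 : Γk1.PosDef)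
    (ak : Fin k → ℝ) (hak : ak = fun i : Fin k => μ ((i : ℕ) + 1))
    (ak1 : Fin (k + 1) → ℝ) (hak1 : ak1 = fun i : Fin (k + 1) => μ ((i : ℕ) + 1))
    (H : Matrix (Fin (k + 1)) (Fin (k + 1)) ℝ)
    (hH : H = Matrix.of fun i j : Fin (k + 1) => μ ((i : ℕ) + (j : ℕ) + 1)) :
    ak1 ⬝ᵥ Γk1⁻¹ *ᵥ ak1 = ak ⬝ᵥ Γk⁻¹ *ᵥ ak + H.det ^ 2 / (Γk.det * Γk1.det) ∧
      (H.det ≠ 0 → ak ⬝ᵥ Γk⁻¹ *ᵥ ak < ak1 ⬝ᵥ Γk1⁻¹ *ᵥ ak1) := by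
  let e : Fin k ⊕ Fin 1 ≃ Fin (k + 1) := finSumFinEquiv
  set b : Fin k → ℝ := fun i => μ (k + i + 2)
  set s := μ (k + k + 2) - b ⬝ᵥ Γk⁻¹ *ᵥ b
  set β := μ (k + 1) - b ⬝ᵥ Γk⁻¹ *ᵥ ak
  have hdet := hpos.det_pos
  have hdet1 := hpos1.det_pos
  have hunit : IsUnit Γk.det := hdet.ne'.isUnit
  have hΓ : Γk1.submatrix e e = fromBlocks Γk (replicateCol (Fin 1) b) (replicateRow (Fin 1) b)
      (of fun _ _ => μ (k + k + 2)) := by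
    rw [hΓk1, hΓk]; exact hankel_submatrix_finSumFinEquiv μ 2 k
  have hG : (H.submatrix id (finRotate (k + 1))).submatrix e e = fromBlocks Γk
      (replicateCol (Fin 1) ak) (replicateRow (Fin 1) b) (of fun _ _ => μ (k + 1)) := by
    rw [hH, hΓk, hak]; exact hankel_submatrix_finRotate μ k
  have ha : ak1 ∘ e = Sum.elim ak (fun _ => μ (k + 1)) := by
    rw [hak1, hak]; exact comp_finSumFinEquiv_eq_sumElim μ 1 k
  have hdetΓ : Γk1.det = Γk.det * s := by
    rw [← det_submatrix_equiv_self e, hΓ, det_fromBlocks_replicateCol_replicateRow _ hunit]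
  have hdetH : H.det ^ 2 = (Γk.det * β) ^ 2 := by
    rw [← det_submatrix_id_perm_sq H (finRotate _), ← det_submatrix_equiv_self e, hG,
      det_fromBlocks_replicateCol_replicateRow _ hunit]
  have hs : 0 < s := pos_of_mul_pos_right (hdetΓ ▸ hdet1) hdet.le
  have hθ : ak1 ⬝ᵥ Γk1⁻¹ *ᵥ ak1 = ak ⬝ᵥ Γk⁻¹ *ᵥ ak + β ^ 2 / s := by
    rw [← dotProduct_inv_mulVec_submatrix_equiv Γk1 e, ha, hΓ,
      sumElim_dotProduct_inv_fromBlocks_mulVec (isHermitian_iff_isSymm.1 hpos.isHermitian) hunit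
        _ _ _ _ hs.ne']
  have hrec : ak1 ⬝ᵥ Γk1⁻¹ *ᵥ ak1 = ak ⬝ᵥ Γk⁻¹ *ᵥ ak + H.det ^ 2 / (Γk.det * Γk1.det) := by
    rw [hθ, hdetH, hdetΓ]
    field_simp
  refine ⟨hrec, fun _ => ?_⟩
  rw [hrec, lt_add_iff_pos_right]
  positivity
end

section
/- If Q is a mixing distribution on (0,∞) supported on exactly k points, then θ_k(f_Q) = θ(f_Q); i.e., the k-th moment lower bound is exact: a_k' Γ_k^{-1} a_k = μ(0), where μ(x) = ∫ λ^x dΦ(λ), dΦ(λ) = (e^λ−1)^{-1}dQ(λ), a_k = (μ(j))_{j=1}^k, Γ_k = (μ(i+j))_{i,j=1}^k. -/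
open Matrix

/-- If the mixing distribution `Q` is supported on exactly `k`
points of `(0,∞)` (atoms `l i` with weights `p i`), then the `k`-th moment
lower bound is exact: `a_k' Γ_k⁻¹ a_k = μ(0)`, where
`μ(x) = ∫ λ^x dΦ(λ)` with `dΦ = (e^λ - 1)⁻¹ dQ`. -/
theorem theta_k_exact_for_k_atomic (k : ℕ) (hk : 0 < k)
    (l p : Fin k → ℝ) (hl : Function.Injective l) (hlpos : ∀ i, 0 < l i)
    (hp : ∀ i, 0 < p i) (hsum : ∑ i, p i = 1)
    (μ : ℕ → ℝ)
    (hμ : μ = fun x => ∑ i, p i * (Real.exp (l i) - 1)⁻¹ * l i ^ x)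
    (Γ : Matrix (Fin k) (Fin k) ℝ)
    (hΓ : Γ = Matrix.of fun i j : Fin k => μ ((i : ℕ) + (j : ℕ) + 2))
    (a : Fin k → ℝ) (ha : a = fun i : Fin k => μ ((i : ℕ) + 1)) :
    a ⬝ᵥ Γ⁻¹ *ᵥ a = μ 0 := by
  subst hμ hΓ ha
  set w : Fin k → ℝ := fun m => p m * (Real.exp (l m) - 1)⁻¹ with hw
  have hwpos : ∀ m, 0 < w m := by
    intro m
    have h1 : (1:ℝ) < Real.exp (l m) := by
      rw [← Real.exp_zero]; exact Real.exp_lt_exp.mpr (hlpos m)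
    exact mul_pos (hp m) (inv_pos.mpr (by linarith))
  set V : Matrix (Fin k) (Fin k) ℝ := Matrix.of (fun i m => l m ^ ((i:ℕ)+1)) with hV
  have hVdet : V.det ≠ 0 := by
    have hVeq : V = (Matrix.diagonal l * Matrix.vandermonde l)ᵀ := by
      ext i m
      simp [hV, Matrix.transpose_apply, Matrix.mul_apply, Matrix.diagonal_apply,
        Matrix.vandermonde, ite_mul, Finset.sum_ite_eq, pow_succ]
      ring
    rw [hVeq, Matrix.det_transpose, Matrix.det_mul, Matrix.det_diagonal,
      Matrix.det_vandermonde]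
    apply mul_ne_zero
    · exact Finset.prod_ne_zero_iff.mpr fun m _ => (hlpos m).ne'
    · refine Finset.prod_ne_zero_iff.mpr fun i _ => ?_
      refine Finset.prod_ne_zero_iff.mpr fun j hj => sub_ne_zero.mpr ?_
      intro h
      exact (Finset.mem_Ioi.mp hj).ne' (hl h)
  set D : Matrix (Fin k) (Fin k) ℝ := Matrix.diagonal w with hD
  have hΓfac : (Matrix.of fun i j : Fin k =>
      ∑ m, p m * (Real.exp (l m) - 1)⁻¹ * l m ^ ((i:ℕ) + (j:ℕ) + 2)) = V * D * Vᵀ := by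
    ext i j
    rw [Matrix.mul_apply]
    simp only [Matrix.of_apply, hD, Matrix.mul_diagonal, Matrix.transpose_apply, hV]
    refine Finset.sum_congr rfl fun m _ => ?_
    simp only [hw, Matrix.of_apply]
    rw [show (i:ℕ) + (j:ℕ) + 2 = ((i:ℕ)+1) + ((j:ℕ)+1) by ring, pow_add]
    ring
  have hΓdet : IsUnit (Matrix.of fun i j : Fin k =>
      ∑ m, p m * (Real.exp (l m) - 1)⁻¹ * l m ^ ((i:ℕ) + (j:ℕ) + 2)).det := by
    rw [hΓfac]
    simp only [Matrix.det_mul, Matrix.det_transpose, hD, Matrix.det_diagonal]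
    exact (mul_ne_zero (mul_ne_zero hVdet
      (Finset.prod_ne_zero_iff.mpr fun m _ => (hwpos m).ne')) hVdet).isUnit
  have hVTdet : IsUnit (Vᵀ).det := by rw [Matrix.det_transpose]; exact hVdet.isUnit
  set x : Fin k → ℝ := (Vᵀ)⁻¹ *ᵥ (fun _ => 1) with hx
  have hVTx : Vᵀ *ᵥ x = fun _ => 1 := by
    rw [hx, Matrix.mulVec_mulVec, Matrix.mul_nonsing_inv _ hVTdet, Matrix.one_mulVec]
  have haVw : (fun i : Fin k => ∑ m, p m * (Real.exp (l m) - 1)⁻¹ * l m ^ ((i:ℕ) + 1))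
      = V *ᵥ w := by
    funext i
    simp only [Matrix.mulVec, dotProduct, hV, Matrix.of_apply, hw]
    exact Finset.sum_congr rfl fun m _ => by ring
  have hΓx : (Matrix.of fun i j : Fin k =>
      ∑ m, p m * (Real.exp (l m) - 1)⁻¹ * l m ^ ((i:ℕ) + (j:ℕ) + 2)) *ᵥ x = fun i : Fin k =>
      ∑ m, p m * (Real.exp (l m) - 1)⁻¹ * l m ^ ((i:ℕ) + 1) := by
    rw [hΓfac, Matrix.mul_assoc, ← Matrix.mulVec_mulVec, ← Matrix.mulVec_mulVec,
      hVTx, haVw]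
    congr 1
    funext m
    simp [Matrix.mulVec, dotProduct, hD, Matrix.diagonal_apply, mul_ite,
      Finset.sum_ite_eq, Finset.sum_ite_eq']
  have hinvx : (Matrix.of fun i j : Fin k =>
      ∑ m, p m * (Real.exp (l m) - 1)⁻¹ * l m ^ ((i:ℕ) + (j:ℕ) + 2))⁻¹ *ᵥ (fun i : Fin k =>
      ∑ m, p m * (Real.exp (l m) - 1)⁻¹ * l m ^ ((i:ℕ) + 1)) = x := by
    rw [← hΓx, Matrix.mulVec_mulVec, Matrix.nonsing_inv_mul _ hΓdet, Matrix.one_mulVec]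
  rw [hinvx, haVw, dotProduct_comm, Matrix.dotProduct_mulVec,
    ← Matrix.mulVec_transpose, hVTx]
  simp only [dotProduct, hw, one_mul, pow_zero]
  exact Finset.sum_congr rfl fun m _ => by ring
end
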